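/- There is a constant C such that for every real ν ≥ 1 and every real r with 0 < r ≤ ν/2, one has |J_ν(r)| ≤ C / ν. -/

import Mathlib

open Real

/-!
Bounding the series term by term with `Γ(m + ν + 1) ≥ (ν + 1)^m Γ(ν + 1)` gives
`|J_ν(x)| ≤ (x/2)^ν / Γ(ν + 1) · exp((x/2)² / (ν + 1))`. For `r ≤ ν/2` the exponential factor is
at most `e^{ν/16}`, while the Stirling-type bound `ν^ν e^{-ν} ≤ ν Γ(ν + 1)` turns
`(ν/4)^ν / Γ(ν + 1)` into at most `ν (e/4)^ν`. Since `e^{17/16} < 4`, what remains is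
`ν e^{-cν}` with `c > 0`, which is `O(1/ν)`.
-/

/-- The Bessel function of the first kind of real order `ν`, defined for `x ≥ 0` by the
convergent power series `J_ν(x) = ∑_{m=0}^∞ (-1)^m / (m! Γ(m+ν+1)) (x/2)^{2m+ν}`
(with real exponents interpreted via `Real.rpow`, so that `J_ν(0) = 0` for `ν > 0` and
`J_0(0) = 1`). -/
noncomputable def besselJ (ν x : ℝ) : ℝ :=
  ∑' m : ℕ, ((-1 : ℝ) ^ m / (m.factorial * Real.Gamma (m + ν + 1))) * (x / 2) ^ (2 * (m : ℝ) + ν)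

lemma add_one_pow_mul_Gamma_le_Gamma_natCast_add {ν : ℝ} (hν : 0 ≤ ν) (m : ℕ) :
    (ν + 1) ^ m * Gamma (ν + 1) ≤ Gamma (m + ν + 1) := by
  induction m with
  | zero => simp
  | succ m ih =>
    have hpos : 0 < (m : ℝ) + ν + 1 := by positivity
    rw [show ((m + 1 : ℕ) : ℝ) + ν + 1 = (m + ν + 1) + 1 by push_cast; ring,
      Gamma_add_one hpos.ne', pow_succ', mul_assoc]
    gcongr
    linarith [(Nat.cast_nonneg m : (0 : ℝ) ≤ m)]

lemma abs_besselJ_term_le {ν x : ℝ} (hν : 0 ≤ ν) (hx : 0 ≤ x) (m : ℕ) :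
    |(-1 : ℝ) ^ m / (m.factorial * Gamma (m + ν + 1)) * (x / 2) ^ (2 * (m : ℝ) + ν)|
      ≤ (x / 2) ^ ν / Gamma (ν + 1) * (((x / 2) ^ 2 / (ν + 1)) ^ m / m.factorial) := by
  have hx2 : 0 ≤ x / 2 := by positivity
  have hpow : (x / 2) ^ (2 * (m : ℝ) + ν) = ((x / 2) ^ 2) ^ m * (x / 2) ^ ν := by
    rw [rpow_add_of_nonneg hx2 (by positivity) hν, rpow_mul hx2, rpow_natCast, rpow_two]
  rw [abs_mul, abs_div, abs_pow, abs_neg, abs_one, one_pow, hpow,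
    abs_of_nonneg (by positivity), abs_of_nonneg (by positivity)]
  calc 1 / (m.factorial * Gamma (m + ν + 1)) * (((x / 2) ^ 2) ^ m * (x / 2) ^ ν)
      ≤ 1 / (m.factorial * ((ν + 1) ^ m * Gamma (ν + 1))) * (((x / 2) ^ 2) ^ m * (x / 2) ^ ν) := by
        gcongr
        exact add_one_pow_mul_Gamma_le_Gamma_natCast_add hν m
    _ = (x / 2) ^ ν / Gamma (ν + 1) * (((x / 2) ^ 2 / (ν + 1)) ^ m / m.factorial) := by
        rw [div_pow ((x / 2) ^ 2)]; field_simp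

theorem abs_besselJ_le {ν x : ℝ} (hν : 0 ≤ ν) (hx : 0 ≤ x) :
    |besselJ ν x| ≤ (x / 2) ^ ν / Gamma (ν + 1) * exp ((x / 2) ^ 2 / (ν + 1)) := by
  have hmajorant : HasSum
      (fun m : ℕ ↦ (x / 2) ^ ν / Gamma (ν + 1) * (((x / 2) ^ 2 / (ν + 1)) ^ m / m.factorial))
      ((x / 2) ^ ν / Gamma (ν + 1) * exp ((x / 2) ^ 2 / (ν + 1))) := by
    rw [exp_eq_exp_ℝ]
    exact (NormedSpace.expSeries_div_hasSum_exp ((x / 2) ^ 2 / (ν + 1))).mul_left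
      ((x / 2) ^ ν / Gamma (ν + 1))
  set a : ℕ → ℝ := fun m ↦
    (-1 : ℝ) ^ m / (m.factorial * Gamma (m + ν + 1)) * (x / 2) ^ (2 * (m : ℝ) + ν)
  have hterm : ∀ m, ‖a m‖ ≤ _ := abs_besselJ_term_le hν hx
  have habs := hmajorant.summable.of_nonneg_of_le (fun _ ↦ norm_nonneg _) hterm
  calc |besselJ ν x| = ‖∑' m, a m‖ := rfl
    _ ≤ ∑' m, ‖a m‖ := norm_tsum_le_tsum_norm habs
    _ ≤ ∑' m : ℕ, (x / 2) ^ ν / Gamma (ν + 1) * (((x / 2) ^ 2 / (ν + 1)) ^ m / m.factorial) :=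
        habs.tsum_le_tsum hterm hmajorant.summable
    _ = _ := hmajorant.tsum_eq

lemma rpow_mul_exp_neg_le_mul_Gamma_add_one {ν : ℝ} (hν : 1 ≤ ν) :
    ν ^ ν * exp (-ν) ≤ ν * Gamma (ν + 1) := by
  set n := ⌊ν⌋₊
  have hν0 : 0 ≤ ν := by linarith
  have hn : (1 : ℝ) ≤ n := by exact_mod_cast Nat.le_floor (by exact_mod_cast hν)
  have hpow : ν ^ n * exp (-ν) ≤ n.factorial := by
    have := pow_div_factorial_le_exp ν hν0 n
    rw [div_le_iff₀ (by positivity)] at this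
    rw [exp_neg, mul_inv_le_iff₀ (exp_pos ν)]
    linarith
  have hfact : (n.factorial : ℝ) ≤ Gamma (ν + 1) := by
    rw [← Gamma_nat_eq_factorial]
    exact Gamma_strictMonoOn_Ici.monotoneOn (by simp; linarith) (by simp; linarith)
      (by linarith [Nat.floor_le hν0])
  calc ν ^ ν * exp (-ν) ≤ ν ^ ((n + 1 : ℕ) : ℝ) * exp (-ν) := by
        gcongr
        push_cast; exact (Nat.lt_floor_add_one ν).le
    _ = ν * (ν ^ n * exp (-ν)) := by rw [rpow_natCast]; ring
    _ ≤ ν * Gamma (ν + 1) := by gcongr; exact hpow.trans hfact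

lemma mul_rpow_div_Gamma_add_one_le {a ν : ℝ} (ha : 0 < a) (hν : 1 ≤ ν) :
    (a * ν) ^ ν / Gamma (ν + 1) ≤ ν * exp ((log a + 1) * ν) := by
  have hν0 : 0 ≤ ν := by linarith
  rw [div_le_iff₀ (Gamma_pos_of_pos (by positivity)), mul_rpow ha.le hν0, rpow_def_of_pos ha,
    add_mul, one_mul, exp_add]
  have := rpow_mul_exp_neg_le_mul_Gamma_add_one hν
  rw [exp_neg, mul_inv_le_iff₀ (exp_pos ν)] at this
  calc exp (log a * ν) * ν ^ ν ≤ exp (log a * ν) * (ν * Gamma (ν + 1) * exp ν) := by gcongr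
    _ = _ := by ring

lemma sq_mul_exp_neg_mul_le {c x : ℝ} (hc : 0 < c) (hx : 0 ≤ x) :
    x ^ 2 * exp (-(c * x)) ≤ 2 / c ^ 2 := by
  have := quadratic_le_exp_of_nonneg (mul_nonneg hc.le hx)
  rw [exp_neg, ← div_eq_mul_inv, div_le_div_iff₀ (exp_pos _) (by positivity)]
  nlinarith [exp_pos (c * x)]

/-- **Decay of Bessel functions below the turning point:** there is a constant `C` such
that `|J_ν(r)| ≤ C / ν` for all `ν ≥ 1` and `0 < r ≤ ν/2`. -/
theorem besselJ_decay_small_argument :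
    ∃ C : ℝ, 0 < C ∧ ∀ ν r : ℝ, 1 ≤ ν → 0 < r → r ≤ ν / 2 →
      |besselJ ν r| ≤ C / ν := by
  set c := log 4 - 17 / 16 with hc_def
  have hc : 0 < c := by
    have : log 4 = 2 * log 2 := by
      rw [show (4 : ℝ) = 2 ^ 2 by norm_num, log_pow]; push_cast; ring
    have := log_two_gt_d9
    norm_num at this
    linarith
  refine ⟨2 / c ^ 2, by positivity, fun ν r hν hr hrν ↦ ?_⟩
  have hν0 : 0 < ν := by linarith
  have hexp : (r / 2) ^ 2 / (ν + 1) ≤ ν / 16 := by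
    rw [div_le_div_iff₀ (by positivity) (by norm_num)]
    nlinarith
  calc |besselJ ν r|
      ≤ (r / 2) ^ ν / Gamma (ν + 1) * exp ((r / 2) ^ 2 / (ν + 1)) := abs_besselJ_le hν0.le hr.le
    _ ≤ (4⁻¹ * ν) ^ ν / Gamma (ν + 1) * exp (ν / 16) := by
        gcongr
        linarith
    _ ≤ ν * exp ((log 4⁻¹ + 1) * ν) * exp (ν / 16) := by
        gcongr; exact mul_rpow_div_Gamma_add_one_le (by norm_num) hν
    _ = ν * exp (-(c * ν)) := by rw [mul_assoc, ← exp_add, log_inv, hc_def]; ring_nf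
    _ ≤ 2 / c ^ 2 / ν := by
        rw [le_div_iff₀ hν0]
        linarith [sq_mul_exp_neg_mul_le hc hν0.le]
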